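/- Let ρ : 𝕊^n₊ → ℝ be a C^1 function with 0 < c ≤ ρ ≤ C and ‖∇_τ ρ‖_{C^0} ≤ L, where c > L. Define Φ_ρ(x) = ρ(x)x for x ∈ 𝕊^n₊. Then for all x, y ∈ 𝕊^n₊ one has the two-sided bound (c − L)|y−x| ≤ |Φ_ρ(y) − Φ_ρ(x)| ≤ (C + L)|y−x|. -/

import Mathlib

/-!
Since `‖x‖ = ‖y‖ = 1`, `‖ρ y • y - ρ x • x‖² = (ρ y - ρ x)² + ρ x ρ y ‖y - x‖²`, and the second
term alone gives the lower bound. For the upper bound, differentiate `ρ` along the great-circle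
arc from `x` to `y`, which stays in the hemisphere: only the tangential gradient enters, so
`|ρ y - ρ x| ≤ L · angle x y ≤ (π / 2) L ‖y - x‖`, and `(π L / 2)² + C² ≤ (C + L)²` as `L < c ≤ C`.
-/

open MeasureTheory Metric Filter
open scoped RealInnerProductSpace ENNReal

noncomputable section

abbrev Euc (m : ℕ) := EuclideanSpace ℝ (Fin m)

/-- Tangential gradient along the unit sphere: projection of the ambient gradient
of (an extension of) `f` onto the tangent space of the sphere at `x`. -/
noncomputable def tangGrad {m : ℕ} (f : Euc m → ℝ) (x : Euc m) : Euc m :=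
  gradient f x - ⟪gradient f x, x⟫ • x

/-- The closed upper unit hemisphere in `ℝ^{n+1}`. -/
def upperHemi (n : ℕ) : Set (Euc (n+1)) := {x | ‖x‖ = 1 ∧ 0 ≤ x (Fin.last n)}

open Real InnerProductGeometry Set

section GreatArc

variable {V : Type*} [NormedAddCommGroup V] [InnerProductSpace ℝ V]

def greatArc (x v : V) (t : ℝ) : V := cos t • x + sin t • v

theorem hasDerivAt_greatArc (x v : V) (t : ℝ) :
    HasDerivAt (greatArc x v) (greatArc x v (t + π / 2)) t := by
  have h := ((hasDerivAt_cos t).smul_const x).add ((hasDerivAt_sin t).smul_const v)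
  rw [greatArc, cos_add_pi_div_two, sin_add_pi_div_two]
  exact h

theorem greatArc_zero (x v : V) : greatArc x v 0 = x := by
  simp [greatArc]

variable {x v : V}

theorem inner_greatArc (hx : ‖x‖ = 1) (hv : ‖v‖ = 1) (hxv : ⟪x, v⟫ = 0) (s t : ℝ) :
    ⟪greatArc x v s, greatArc x v t⟫ = cos (s - t) := by
  have hvx : ⟪v, x⟫ = 0 := by rwa [real_inner_comm]
  simp only [greatArc, inner_add_left, inner_add_right, real_inner_smul_left,
    real_inner_smul_right, real_inner_self_eq_norm_sq, hx, hv, hxv, hvx, cos_sub]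
  ring

theorem norm_greatArc (hx : ‖x‖ = 1) (hv : ‖v‖ = 1) (hxv : ⟪x, v⟫ = 0) (t : ℝ) :
    ‖greatArc x v t‖ = 1 := by
  have h := inner_greatArc hx hv hxv t t
  rw [sub_self, cos_zero, real_inner_self_eq_norm_sq] at h
  exact (pow_eq_one_iff_of_nonneg (norm_nonneg _) two_ne_zero).mp h

/-- For `t ∈ [0, θ] ⊆ [0, π]` both coefficients are nonnegative, so the arc stays in every convex
cone containing its endpoints. -/
theorem sin_smul_greatArc (x v : V) (θ t : ℝ) :
    sin θ • greatArc x v t = sin (θ - t) • x + sin t • greatArc x v θ := by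
  simp only [greatArc, smul_add, smul_smul, sin_sub]
  module

theorem exists_greatArc_angle_eq (hx : ‖x‖ = 1) {y : V} (hy : ‖y‖ = 1)
    (hxy : sin (angle x y) ≠ 0) :
    ∃ v : V, ‖v‖ = 1 ∧ ⟪x, v⟫ = 0 ∧ greatArc x v (angle x y) = y := by
  set θ := angle x y
  have hcos : ⟪x, y⟫ = cos θ := inner_eq_cos_angle_of_norm_eq_one hx hy
  have hnorm : ‖y - cos θ • x‖ ^ 2 = sin θ ^ 2 := by
    rw [norm_sub_sq_real, real_inner_smul_right, norm_smul, hx, hy, Real.norm_eq_abs,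
      real_inner_comm, hcos, sin_sq, mul_one, sq_abs]
    ring
  refine ⟨(sin θ)⁻¹ • (y - cos θ • x), ?_, ?_, ?_⟩
  · rw [norm_smul, norm_inv, Real.norm_eq_abs, ← sq_eq_sq₀ (by positivity) zero_le_one,
      mul_pow, hnorm, inv_pow, sq_abs, inv_mul_cancel₀ (pow_ne_zero 2 hxy), one_pow]
  · rw [real_inner_smul_right, inner_sub_right, real_inner_smul_right,
      real_inner_self_eq_norm_sq, hx, hcos]
    ring
  · rw [greatArc, smul_smul, mul_inv_cancel₀ hxy, one_smul]
    abel

theorem sin_angle_ne_zero (hx : ‖x‖ = 1) {y : V} (hy : ‖y‖ = 1) (hxy : x ≠ y)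
    (hxy_neg : x ≠ -y) : sin (angle x y) ≠ 0 := by
  rw [Ne, sin_eq_zero_iff_cos_eq, ← inner_eq_cos_angle_of_norm_eq_one hx hy,
    inner_eq_one_iff_of_norm_eq_one hx hy, inner_eq_neg_one_iff_of_norm_eq_one hx hy]
  tauto

theorem norm_sub_eq_two_mul_sin_half_angle (hx : ‖x‖ = 1) {y : V} (hy : ‖y‖ = 1) :
    ‖y - x‖ = 2 * sin (angle x y / 2) := by
  have hlaw := norm_sub_sq_eq_norm_sq_add_norm_sq_sub_two_mul_norm_mul_norm_mul_cos_angle x y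
  have hhalf : cos (angle x y) = 1 - 2 * sin (angle x y / 2) ^ 2 := by
    conv_lhs => rw [← mul_div_cancel₀ (angle x y) two_ne_zero, cos_two_mul']
    linarith [sin_sq_add_cos_sq (angle x y / 2)]
  rw [hx, hy, hhalf, norm_sub_rev] at hlaw
  have hsin : 0 ≤ sin (angle x y / 2) :=
    sin_nonneg_of_nonneg_of_le_pi (by linarith [angle_nonneg x y])
      (by linarith [angle_le_pi x y, pi_pos])
  nlinarith [norm_nonneg (y - x)]

/-- Jordan's inequality `2 s / π ≤ sin s` on `[0, π / 2]`, applied to half the angle. -/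
theorem angle_le_pi_div_two_mul_norm_sub (hx : ‖x‖ = 1) {y : V} (hy : ‖y‖ = 1) :
    angle x y ≤ π / 2 * ‖y - x‖ := by
  have hjordan := mul_le_sin (x := angle x y / 2) (by linarith [angle_nonneg x y])
    (by linarith [angle_le_pi x y])
  rw [norm_sub_eq_two_mul_sin_half_angle hx hy]
  have hπ := pi_pos
  calc angle x y = π * (2 / π * (angle x y / 2)) := by field_simp
    _ ≤ π * sin (angle x y / 2) := by gcongr
    _ = π / 2 * (2 * sin (angle x y / 2)) := by ring

end GreatArc

section NormBounds

variable {V : Type*} [NormedAddCommGroup V] [InnerProductSpace ℝ V] {x y : V}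

theorem norm_smul_sub_smul_sq (hx : ‖x‖ = 1) (hy : ‖y‖ = 1) (a b : ℝ) :
    ‖a • y - b • x‖ ^ 2 = (a - b) ^ 2 + a * b * ‖y - x‖ ^ 2 := by
  rw [norm_sub_sq_real, norm_sub_sq_real, norm_smul, norm_smul, real_inner_smul_left,
    real_inner_smul_right, hx, hy, Real.norm_eq_abs, Real.norm_eq_abs, mul_pow, mul_pow, sq_abs,
    sq_abs]
  ring

theorem mul_norm_sub_le_norm_smul_sub_smul (hx : ‖x‖ = 1) (hy : ‖y‖ = 1) {a b c : ℝ}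
    (hc : 0 ≤ c) (hca : c ≤ a) (hcb : c ≤ b) :
    c * ‖y - x‖ ≤ ‖a • y - b • x‖ := by
  refine (pow_le_pow_iff_left₀ (by positivity) (norm_nonneg _) two_ne_zero).mp ?_
  have hcc : c * c ≤ a * b := mul_le_mul hca hcb hc (hc.trans hca)
  rw [norm_smul_sub_smul_sq hx hy]
  nlinarith [sq_nonneg (a - b), sq_nonneg ‖y - x‖]

theorem norm_smul_sub_smul_le (hx : ‖x‖ = 1) (hy : ‖y‖ = 1) {a b C K : ℝ}
    (ha : 0 ≤ a) (hb : 0 ≤ b) (haC : a ≤ C) (hbC : b ≤ C) (hab : |a - b| ≤ K * ‖y - x‖) :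
    ‖a • y - b • x‖ ≤ √(K ^ 2 + C ^ 2) * ‖y - x‖ := by
  refine (pow_le_pow_iff_left₀ (norm_nonneg _) (by positivity) two_ne_zero).mp ?_
  have hCC : a * b ≤ C * C := mul_le_mul haC hbC hb (ha.trans haC)
  have hK : (a - b) ^ 2 ≤ (K * ‖y - x‖) ^ 2 := sq_le_sq' (abs_le.mp hab).1 (abs_le.mp hab).2
  rw [norm_smul_sub_smul_sq hx hy, mul_pow, sq_sqrt (by positivity)]
  nlinarith [sq_nonneg ‖y - x‖]

end NormBounds

section Sphere

variable {m : ℕ}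

theorem inner_tangGrad_of_inner_eq_zero (f : Euc m → ℝ) {x w : Euc m} (hxw : ⟪x, w⟫ = 0) :
    ⟪tangGrad f x, w⟫ = ⟪gradient f x, w⟫ := by
  rw [tangGrad, inner_sub_left, real_inner_smul_left, hxw, mul_zero, sub_zero]

/-- The velocity of the arc is orthogonal to its position, so only the tangential gradient
contributes to the derivative of `f` along it. -/
theorem abs_sub_le_of_norm_tangGrad_le_on_greatArc {f : Euc m → ℝ} (hf : Differentiable ℝ f)
    {x v : Euc m} (hx : ‖x‖ = 1) (hv : ‖v‖ = 1) (hxv : ⟪x, v⟫ = 0) {θ L : ℝ} (hθ : 0 ≤ θ)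
    (hL : ∀ t ∈ Icc 0 θ, ‖tangGrad f (greatArc x v t)‖ ≤ L) :
    |f (greatArc x v θ) - f x| ≤ L * θ := by
  set γ := greatArc x v
  have hderiv : ∀ t, HasDerivAt (f ∘ γ) ⟪gradient f (γ t), γ (t + π / 2)⟫ t := fun t =>
    (hf (γ t)).hasGradientAt.hasFDerivAt.comp_hasDerivAt t (hasDerivAt_greatArc x v t)
  have hbound : ∀ t ∈ Ico 0 θ, ‖⟪gradient f (γ t), γ (t + π / 2)⟫‖ ≤ L := by
    intro t ht
    have horth : ⟪γ t, γ (t + π / 2)⟫ = 0 := by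
      rw [inner_greatArc hx hv hxv, sub_add_cancel_left, cos_neg, cos_pi_div_two]
    rw [← inner_tangGrad_of_inner_eq_zero f horth]
    calc ‖⟪tangGrad f (γ t), γ (t + π / 2)⟫‖
        ≤ ‖tangGrad f (γ t)‖ * ‖γ (t + π / 2)‖ := norm_inner_le_norm _ _
      _ ≤ L := by rw [norm_greatArc hx hv hxv, mul_one]; exact hL t (Ico_subset_Icc_self ht)
  have h := norm_image_sub_le_of_norm_deriv_le_segment' (fun t _ => (hderiv t).hasDerivWithinAt)
    hbound θ (right_mem_Icc.mpr hθ)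
  simpa [γ, greatArc_zero, Real.norm_eq_abs] using h

end Sphere

section Hemisphere

variable {n : ℕ}

/-- Antipodal points of the hemisphere lie on the equator; they are joined through the north
pole. -/
theorem exists_greatArc_subset_upperHemi {x y : Euc (n + 1)} (hx : x ∈ upperHemi n)
    (hy : y ∈ upperHemi n) (hxy : x ≠ y) :
    ∃ v : Euc (n + 1), ‖v‖ = 1 ∧ ⟪x, v⟫ = 0 ∧ greatArc x v (angle x y) = y ∧
      ∀ t ∈ Icc 0 (angle x y), greatArc x v t ∈ upperHemi n := by
  by_cases hanti : x = -y
  · have hx0 : x (Fin.last n) = 0 := by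
      have hy0 : 0 ≤ -x (Fin.last n) := by simpa [hanti] using hy.2
      linarith [hx.2]
    have hxv : ⟪x, EuclideanSpace.single (Fin.last n) 1⟫ = 0 := by
      simp [EuclideanSpace.inner_single_right, hx0]
    have hv : ‖EuclideanSpace.single (Fin.last n) (1 : ℝ)‖ = 1 := by simp
    have hangle : angle x y = π := by
      rw [← neg_neg y, ← hanti]
      exact angle_self_neg_of_nonzero (norm_ne_zero_iff.mp (by simp [hx.1]))
    refine ⟨_, hv, hxv, ?_, fun t ht => ⟨norm_greatArc hx.1 hv hxv t, ?_⟩⟩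
    · rw [hangle, greatArc, cos_pi, sin_pi, hanti]
      simp
    · rw [hangle] at ht
      simpa [greatArc, hx0] using sin_nonneg_of_nonneg_of_le_pi ht.1 ht.2
  have hsin0 := sin_angle_ne_zero hx.1 hy.1 hxy hanti
  obtain ⟨v, hv, hxv, hvy⟩ := exists_greatArc_angle_eq hx.1 hy.1 hsin0
  refine ⟨v, hv, hxv, hvy, fun t ht => ⟨norm_greatArc hx.1 hv hxv t, ?_⟩⟩
  have hsin : 0 < sin (angle x y) := (sin_angle_nonneg x y).lt_of_ne' hsin0
  have hcomb := congrArg (· (Fin.last n)) (sin_smul_greatArc x v (angle x y) t)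
  simp only [hvy, PiLp.add_apply, PiLp.smul_apply, smul_eq_mul] at hcomb
  have hθ := angle_le_pi x y
  have h1 := sin_nonneg_of_nonneg_of_le_pi (sub_nonneg.mpr ht.2) (by linarith [ht.1])
  have h2 := sin_nonneg_of_nonneg_of_le_pi ht.1 (by linarith [ht.2])
  have hx0 := hx.2
  have hy0 := hy.2
  exact nonneg_of_mul_nonneg_right (by rw [hcomb]; positivity) hsin

theorem abs_sub_le_of_norm_tangGrad_le {ρ : Euc (n + 1) → ℝ} (hρ : Differentiable ℝ ρ) {L : ℝ}
    (hgrad : ∀ z ∈ upperHemi n, ‖tangGrad ρ z‖ ≤ L) {x y : Euc (n + 1)}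
    (hx : x ∈ upperHemi n) (hy : y ∈ upperHemi n) :
    |ρ y - ρ x| ≤ π / 2 * L * ‖y - x‖ := by
  rcases eq_or_ne x y with rfl | hxy
  · simp
  obtain ⟨v, hv, hxv, hvy, harc⟩ := exists_greatArc_subset_upperHemi hx hy hxy
  have hL : 0 ≤ L := (norm_nonneg _).trans (hgrad x hx)
  calc |ρ y - ρ x| = |ρ (greatArc x v (angle x y)) - ρ x| := by rw [hvy]
    _ ≤ L * angle x y :=
        abs_sub_le_of_norm_tangGrad_le_on_greatArc hρ hx.1 hv hxv (angle_nonneg x y)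
          fun t ht => hgrad _ (harc t ht)
    _ ≤ L * (π / 2 * ‖y - x‖) := by gcongr; exact angle_le_pi_div_two_mul_norm_sub hx.1 hy.1
    _ = π / 2 * L * ‖y - x‖ := by ring

end Hemisphere

theorem sq_pi_div_two_mul_add_sq_le {L C : ℝ} (hL : 0 ≤ L) (hLC : L ≤ C) :
    (π / 2 * L) ^ 2 + C ^ 2 ≤ (C + L) ^ 2 := by
  have hπ : π ^ 2 ≤ 10 := by nlinarith [pi_lt_d2, pi_pos]
  nlinarith [mul_le_mul_of_nonneg_right hπ (sq_nonneg L), mul_le_mul_of_nonneg_left hLC hL]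

theorem stmt2_general (n : ℕ) (ρ : Euc (n+1) → ℝ) (hρ : ContDiff ℝ 1 ρ)
    (c C L : ℝ) (hLc : L < c)
    (hlow : ∀ x ∈ upperHemi n, c ≤ ρ x) (hup : ∀ x ∈ upperHemi n, ρ x ≤ C)
    (hgrad : ∀ x ∈ upperHemi n, ‖tangGrad ρ x‖ ≤ L) :
    ∀ x ∈ upperHemi n, ∀ y ∈ upperHemi n,
      (c - L) * ‖y - x‖ ≤ ‖ρ y • y - ρ x • x‖ ∧
      ‖ρ y • y - ρ x • x‖ ≤ (C + L) * ‖y - x‖ := by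
  intro x hx y hy
  have hL : 0 ≤ L := (norm_nonneg _).trans (hgrad x hx)
  have hc : 0 ≤ c := hL.trans hLc.le
  have hLC : L ≤ C := hLc.le.trans ((hlow x hx).trans (hup x hx))
  have hlip := abs_sub_le_of_norm_tangGrad_le (hρ.differentiable one_ne_zero) hgrad hx hy
  constructor
  · calc (c - L) * ‖y - x‖ ≤ c * ‖y - x‖ := by gcongr; linarith
      _ ≤ ‖ρ y • y - ρ x • x‖ :=
        mul_norm_sub_le_norm_smul_sub_smul hx.1 hy.1 hc (hlow y hy) (hlow x hx)
  · calc ‖ρ y • y - ρ x • x‖ ≤ √((π / 2 * L) ^ 2 + C ^ 2) * ‖y - x‖ :=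
        norm_smul_sub_smul_le hx.1 hy.1 (hc.trans (hlow y hy)) (hc.trans (hlow x hx))
          (hup y hy) (hup x hx) (mul_assoc (π / 2) L _ ▸ hlip)
      _ ≤ (C + L) * ‖y - x‖ := by
        gcongr
        exact sqrt_le_iff.mpr ⟨by linarith, sq_pi_div_two_mul_add_sq_le hL hLC⟩

/-- bi-Lipschitz bounds for the radial graph map `Φ_ρ(x) = ρ(x)x`
over the upper hemisphere. -/
theorem stmt2 (n : ℕ) (ρ : Euc (n+1) → ℝ) (hρ : ContDiff ℝ 1 ρ)
    (c C L : ℝ) (hc : 0 < c) (hLc : L < c)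
    (hlow : ∀ x ∈ upperHemi n, c ≤ ρ x) (hup : ∀ x ∈ upperHemi n, ρ x ≤ C)
    (hgrad : ∀ x ∈ upperHemi n, ‖tangGrad ρ x‖ ≤ L) :
    ∀ x ∈ upperHemi n, ∀ y ∈ upperHemi n,
      (c - L) * ‖y - x‖ ≤ ‖ρ y • y - ρ x • x‖ ∧
      ‖ρ y • y - ρ x • x‖ ≤ (C + L) * ‖y - x‖ :=
  stmt2_general n ρ hρ c C L hLc hlow hup hgrad
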